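/- Suppose a, k, m are positive integers with m ≥ 4 and k even satisfying a·S_k(m) = m^k, and let p be a prime dividing (m + 1)(2m + 1). If (p − 1) | k, then ord_p((m + 1)(2m + 1)) = ord_p(a + 1) + 1; otherwise, ord_p((m + 1)(2m + 1)) ≤ ord_p(a + 1). -/

import Mathlib

/-- `S k m = 1^k + 2^k + ⋯ + (m-1)^k`. -/
def S (k m : ℕ) : ℕ := ∑ j ∈ Finset.Ico 1 m, j ^ k

/-!
As `0^k = 0`, the hypothesis says `a·(0^k + ⋯ + m^k) = (a+1)·m^k`, and for even `k` the
reflection `j ↦ 2m+1-j` gives `0^k + ⋯ + (2m)^k ≡ 2·(0^k + ⋯ + m^k) (mod 2m+1)`. So for `n = m+1`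
or `n = 2m+1` (the one divisible by `p`; they are coprime), `a` times the power sum over `[0, n)`
is congruent mod `n` to `(a+1)·m^k` times `1` or `2`, a `p`-adic unit. Writing `n = t·p^(l+1)`
with `p ∤ t`, that power sum is `≡ t·p^l·(0^k + ⋯ + (p-1)^k) (mod p^(l+1))`: by periodicity mod
`p^(l+1)`, and by lifting `∑_{j<pN} j^k ≡ p·∑_{j<N} j^k (mod pN)` for `p ∣ N`, where the first-order
binomial term is divisible by `pN` because `k·∑_{q<p} q = (k/2)·p(p-1)`. Finally
`0^k + ⋯ + (p-1)^k ≡ -1` or `0 (mod p)` according as `(p-1) ∣ k` or not, so `ord_p(a+1)`, which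
is `ord_p((a+1)·m^k)` as `p ∤ am`, is `l` in the first case and at least `l+1` in the second.
-/

open Finset

def powerSum (k n : ℕ) : ℤ := ∑ j ∈ range n, (j : ℤ) ^ k

theorem S_eq_sum_range {k : ℕ} (hk : k ≠ 0) (m : ℕ) : S k m = ∑ j ∈ range m, j ^ k := by
  refine sum_subset (fun j hj => mem_range.2 (mem_Ico.1 hj).2) fun j hj hj' => ?_
  obtain rfl : j = 0 := by simp only [mem_range, mem_Ico, not_and, not_lt] at hj hj'; omega
  exact zero_pow hk

theorem powerSum_succ_eq {k : ℕ} (hk : k ≠ 0) (m : ℕ) :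
    powerSum k (m + 1) = S k m + (m : ℤ) ^ k := by
  rw [powerSum, sum_range_succ, S_eq_sum_range hk]
  push_cast
  rfl

theorem mul_powerSum_succ_of_mul_S_eq {a k m : ℕ} (hk : k ≠ 0) (h : a * S k m = m ^ k) :
    (a : ℤ) * powerSum k (m + 1) = (a + 1) * m ^ k := by
  rw [powerSum_succ_eq hk, mul_add, ← Nat.cast_mul, h]
  push_cast
  ring

theorem Finset.sum_range_mul {M : Type*} [AddCommMonoid M] (f : ℕ → M) (t N : ℕ) :
    ∑ j ∈ range (t * N), f j = ∑ q ∈ range t, ∑ r ∈ range N, f (q * N + r) := by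
  induction t with
  | zero => simp
  | succ t ih => rw [add_one_mul, sum_range_add, ih, sum_range_succ]

theorem powerSum_mul_modEq_sq (k t N : ℕ) :
    powerSum k (t * N) ≡ t * powerSum k N
      + k * N * (∑ q ∈ range t, (q : ℤ)) * powerSum (k - 1) N [ZMOD (N : ℤ) ^ 2] := by
  have hexpand (q r : ℕ) : ((q * N + r : ℕ) : ℤ) ^ k
      ≡ (r : ℤ) ^ k + (r : ℤ) ^ (k - 1) * (q * N) * k [ZMOD (N : ℤ) ^ 2] := by
    have h := sq_dvd_add_pow_sub_sub ((q : ℤ) * N) (r : ℤ) k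
    rw [mul_pow] at h
    refine (Int.modEq_iff_dvd.2 ((dvd_mul_left _ _).trans (h.trans (dvd_of_eq ?_)))).symm
    push_cast
    ring
  calc powerSum k (t * N)
      = ∑ q ∈ range t, ∑ r ∈ range N, ((q * N + r : ℕ) : ℤ) ^ k := sum_range_mul _ t N
    _ ≡ ∑ q ∈ range t, ∑ r ∈ range N, ((r : ℤ) ^ k + (r : ℤ) ^ (k - 1) * (q * N) * k)
        [ZMOD (N : ℤ) ^ 2] := Int.ModEq.sum fun q _ => Int.ModEq.sum fun r _ => hexpand q r
    _ = _ := by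
        simp only [powerSum, sum_add_distrib, sum_const, card_range, nsmul_eq_mul, ← sum_mul,
          ← mul_sum]
        ring

theorem powerSum_mul_modEq (k t N : ℕ) : powerSum k (t * N) ≡ t * powerSum k N [ZMOD N] :=
  ((powerSum_mul_modEq_sq k t N).of_dvd (dvd_pow_self _ two_ne_zero)).trans <|
    Int.add_modEq_left_iff.2 <| ((dvd_mul_left _ _).mul_right _).mul_right _

theorem dvd_mul_sum_range_of_even {k : ℕ} (hk : Even k) (n : ℕ) :
    (n : ℤ) ∣ k * ∑ i ∈ range n, (i : ℤ) := by
  obtain ⟨j, rfl⟩ := hk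
  have h : n ∣ (j + j) * ∑ i ∈ range n, i := ⟨j * (n - 1), by
    rw [show (j + j) * ∑ i ∈ range n, i = j * ((∑ i ∈ range n, i) * 2) by ring,
      sum_range_id_mul_two]
    ring⟩
  simpa using Int.natCast_dvd_natCast.2 h

theorem powerSum_mul_modEq_of_dvd {k n N : ℕ} (hk : Even k) (hN : n ∣ N) :
    powerSum k (n * N) ≡ n * powerSum k N [ZMOD n * N] := by
  have hN' : (n : ℤ) ∣ N := Int.natCast_dvd_natCast.2 hN
  have hsq : (n : ℤ) * N ∣ (N : ℤ) ^ 2 := by rw [sq]; exact mul_dvd_mul_right hN' _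
  refine ((powerSum_mul_modEq_sq k n N).of_dvd hsq).trans <| Int.add_modEq_left_iff.2 ?_
  rw [show (k : ℤ) * N * (∑ q ∈ range n, (q : ℤ)) * powerSum (k - 1) N
    = (k * ∑ q ∈ range n, (q : ℤ)) * N * powerSum (k - 1) N by ring]
  exact (mul_dvd_mul_right (dvd_mul_sum_range_of_even hk n) _).mul_right _

theorem powerSum_pow_succ_modEq {k : ℕ} (hk : Even k) (p l : ℕ) :
    powerSum k (p ^ (l + 1)) ≡ p ^ l * powerSum k p [ZMOD p ^ (l + 1)] := by
  induction l with
  | zero => simp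
  | succ l ih =>
    have h := powerSum_mul_modEq_of_dvd hk (dvd_pow_self p l.succ_ne_zero)
    have ih' := ih.mul_left' (c := (p : ℤ))
    simp only [Nat.cast_pow, ← pow_succ', ← mul_assoc] at h ih'
    exact h.trans ih'

theorem powerSum_prime_modEq {p k : ℕ} (hp : p.Prime) (hk : k ≠ 0) :
    powerSum k p ≡ if (p - 1) ∣ k then -1 else 0 [ZMOD p] := by
  have := Fact.mk hp
  rw [← ZMod.intCast_eq_intCast_iff, powerSum]
  push_cast
  have hrange : ∑ j ∈ range p, (j : ZMod p) ^ k = ∑ x : ZMod p, x ^ k :=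
    sum_nbij' (fun j => (j : ZMod p)) ZMod.val (fun _ _ => mem_univ _)
      (fun x _ => mem_range.2 (ZMod.val_lt x))
      (fun _ hj => ZMod.val_cast_of_lt (mem_range.1 hj)) (fun x _ => ZMod.natCast_zmod_val x)
      (fun _ _ => rfl)
  have hunits : ∑ x : ZMod p, x ^ k = ∑ u : (ZMod p)ˣ, (u : ZMod p) ^ k := by
    have himage : univ.map ⟨Units.val, Units.val_injective⟩ = univ.erase (0 : ZMod p) := by
      ext x
      simp [eq_comm]
    rw [← sum_erase univ (zero_pow hk), ← himage, sum_map]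
    rfl
  rw [hrange, hunits, FiniteField.sum_pow_units, ZMod.card]

theorem powerSum_two_mul_add_one_modEq {k : ℕ} (hk : k ≠ 0) (hkeven : Even k) (m : ℕ) :
    powerSum k (2 * m + 1) ≡ 2 * powerSum k (m + 1) [ZMOD 2 * m + 1] := by
  have hupper : ∑ i ∈ range m, ((m + 1 + i : ℕ) : ℤ) ^ k ≡ powerSum k (m + 1)
      [ZMOD 2 * m + 1] := by
    rw [← sum_range_reflect, powerSum, sum_range_succ', Nat.cast_zero, zero_pow hk, add_zero]
    refine Int.ModEq.sum fun i hi => ?_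
    have hcast : ((m + 1 + (m - 1 - i) : ℕ) : ℤ) = -((i + 1 : ℕ) : ℤ) + (2 * m + 1) := by
      rw [eq_neg_add_iff_add_eq]
      have := mem_range.1 hi
      exact_mod_cast (by omega : i + 1 + (m + 1 + (m - 1 - i)) = 2 * m + 1)
    rw [hcast, ← hkeven.neg_pow ((i + 1 : ℕ) : ℤ)]
    exact (Int.add_modulus_modEq_iff.2 rfl).pow k
  calc powerSum k (2 * m + 1)
      = powerSum k (m + 1) + ∑ i ∈ range m, ((m + 1 + i : ℕ) : ℤ) ^ k := by
        rw [powerSum, show 2 * m + 1 = m + 1 + m by ring, sum_range_add, powerSum]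
    _ ≡ powerSum k (m + 1) + powerSum k (m + 1) [ZMOD 2 * m + 1] := hupper.add_left _
    _ = 2 * powerSum k (m + 1) := (two_mul _).symm

theorem padicValNat_eq_of_modEq {p x l : ℕ} (hp : p.Prime) {u : ℤ} (hx : x ≠ 0)
    (hu : ¬ (p : ℤ) ∣ u) (h : (x : ℤ) ≡ u * p ^ l [ZMOD p ^ (l + 1)]) :
    padicValNat p x = l := by
  have := Fact.mk hp
  have hlow : p ^ l ∣ x := by
    have : (p : ℤ) ^ l ∣ x := ((h.of_dvd (pow_dvd_pow _ l.le_succ)).dvd_iff).2 (dvd_mul_left _ _)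
    exact_mod_cast this
  have hhigh : ¬ p ^ (l + 1) ∣ x := by
    intro hdvd
    have : (p : ℤ) ^ (l + 1) ∣ u * p ^ l := h.dvd_iff.1 (by exact_mod_cast hdvd)
    rw [pow_succ, mul_comm u] at this
    exact hu ((mul_dvd_mul_iff_left (pow_ne_zero l (Int.natCast_ne_zero.2 hp.ne_zero))).1 this)
  rw [padicValNat_dvd_iff_le hx] at hlow hhigh
  omega

theorem padicValNat_mul_of_not_dvd_right {p a b : ℕ} [Fact p.Prime] (ha : a ≠ 0)
    (hb : ¬ p ∣ b) : padicValNat p (a * b) = padicValNat p a := by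
  rw [padicValNat.mul ha (by rintro rfl; exact hb (dvd_zero p)),
    padicValNat.eq_zero_of_not_dvd hb, add_zero]

theorem padicValNat_of_modEq_mul_powerSum {p k n a x : ℕ} (hp : p.Prime) (hk : k ≠ 0)
    (hkeven : Even k) (hn : n ≠ 0) (hpn : p ∣ n) (hpa : ¬ p ∣ a) (hx : x ≠ 0)
    (h : (x : ℤ) ≡ a * powerSum k n [ZMOD n]) :
    ((p - 1) ∣ k → padicValNat p n = padicValNat p x + 1) ∧
      (¬ (p - 1) ∣ k → padicValNat p n ≤ padicValNat p x) := by
  have := Fact.mk hp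
  obtain ⟨e, t, hpt, rfl⟩ := Nat.exists_eq_pow_mul_and_not_dvd hn p hp.ne_one
  obtain ⟨l, rfl⟩ : ∃ l, e = l + 1 := Nat.exists_eq_add_one.2 <| Nat.pos_of_ne_zero <| by
    rintro rfl
    exact hpt (by simpa using hpn)
  have hval : padicValNat p (p ^ (l + 1) * t) = l + 1 := by
    rw [padicValNat_mul_of_not_dvd_right (pow_ne_zero _ hp.ne_zero) hpt, padicValNat.prime_pow]
  have hmod : (x : ℤ) ≡ a * (t * (p ^ l * if (p - 1) ∣ k then -1 else 0)) [ZMOD p ^ (l + 1)] := by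
    have hperiod := powerSum_mul_modEq k t (p ^ (l + 1))
    have hpow := (powerSum_pow_succ_modEq hkeven p l).trans
      ((powerSum_prime_modEq hp hk).mul_left' (c := (p : ℤ) ^ l))
    rw [mul_comm t] at hperiod
    push_cast at h hperiod
    exact (h.of_dvd (dvd_mul_right _ _)).trans ((hperiod.trans (hpow.mul_left _)).mul_left _)
  rw [hval]
  constructor
  · intro hdvd
    rw [if_pos hdvd] at hmod
    have hu : ¬ (p : ℤ) ∣ -(a * t) := by
      rw [dvd_neg, ← Nat.cast_mul, Int.natCast_dvd_natCast, hp.dvd_mul]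
      exact not_or.2 ⟨hpa, hpt⟩
    have := padicValNat_eq_of_modEq hp hx hu (by convert hmod using 1; ring)
    omega
  · intro hdvd
    rw [if_neg hdvd, mul_zero, mul_zero, mul_zero] at hmod
    exact (padicValNat_dvd_iff_le hx).1 (by exact_mod_cast (Int.modEq_zero_iff_dvd.1 hmod))

theorem Nat.coprime_add_one_two_mul_add_one (m : ℕ) : Nat.Coprime (m + 1) (2 * m + 1) := by
  rw [show 2 * m + 1 = m + 1 * (m + 1) by ring, Nat.coprime_add_mul_right_right]
  simp

theorem ord_p_m_add_one_general (a k m p : ℕ) (hk : 0 < k)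
    (hkeven : Even k) (heq : a * S k m = m ^ k)
    (hp : p.Prime) (hpdvd : p ∣ (m + 1) * (2 * m + 1)) :
    ((p - 1) ∣ k →
        padicValNat p ((m + 1) * (2 * m + 1)) = padicValNat p (a + 1) + 1) ∧
      (¬ (p - 1) ∣ k →
        padicValNat p ((m + 1) * (2 * m + 1)) ≤ padicValNat p (a + 1)) := by
  have := Fact.mk hp
  have hcop := Nat.coprime_add_one_two_mul_add_one m
  have hpm : ¬ p ∣ m := fun h =>
    hp.not_dvd_one <| (Nat.dvd_add_right (dvd_mul_of_dvd_right h (2 * m + 3))).1 <| by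
      rwa [show (2 * m + 3) * m + 1 = (m + 1) * (2 * m + 1) by ring]
  have hpa : ¬ p ∣ a := fun h => hpm (hp.dvd_of_dvd_pow (heq ▸ dvd_mul_of_dvd_left h _))
  have hm : m ≠ 0 := by rintro rfl; exact hpm (dvd_zero p)
  have hsum := mul_powerSum_succ_of_mul_S_eq hk.ne' heq
  have hval (c : ℕ) (hc : ¬ p ∣ c) :
      padicValNat p (c * ((a + 1) * m ^ k)) = padicValNat p (a + 1) := by
    rw [mul_comm, padicValNat_mul_of_not_dvd_right (by positivity) hc,
      padicValNat_mul_of_not_dvd_right (by omega) fun h => hpm (hp.dvd_of_dvd_pow h)]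
  rcases hp.dvd_mul.1 hpdvd with h | h
  · rw [padicValNat_mul_of_not_dvd_right (by omega)
      fun h' => hp.ne_one (Nat.eq_one_of_dvd_coprimes hcop h h'), ← hval 1 hp.not_dvd_one]
    refine padicValNat_of_modEq_mul_powerSum hp hk.ne' hkeven (by omega) h hpa (by positivity) ?_
    push_cast
    rw [one_mul, hsum]
  · have hp2 : ¬ p ∣ 2 := fun h2 =>
      hp.not_dvd_one <| (Nat.dvd_add_right (dvd_mul_of_dvd_left h2 m)).1 h
    rw [mul_comm, padicValNat_mul_of_not_dvd_right (by omega)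
      fun h' => hp.ne_one (Nat.eq_one_of_dvd_coprimes hcop h' h), ← hval 2 hp2]
    refine padicValNat_of_modEq_mul_powerSum hp hk.ne' hkeven (by omega) h hpa (by positivity) ?_
    have := ((powerSum_two_mul_add_one_modEq hk.ne' hkeven m).mul_left a).symm
    rw [mul_left_comm, hsum] at this
    exact_mod_cast this

/-- If `a·S_k(m) = m^k` with `m ≥ 4` and `k` even, and `p` is a prime dividing
`(m + 1)(2m + 1)`, then `ord_p((m+1)(2m+1)) = ord_p(a+1) + 1` if `(p-1) ∣ k`,
and `ord_p((m+1)(2m+1)) ≤ ord_p(a+1)` otherwise. -/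
theorem ord_p_m_add_one (a k m p : ℕ) (ha : 0 < a) (hk : 0 < k)
    (hkeven : Even k) (hm4 : 4 ≤ m) (heq : a * S k m = m ^ k)
    (hp : p.Prime) (hpdvd : p ∣ (m + 1) * (2 * m + 1)) :
    ((p - 1) ∣ k →
        padicValNat p ((m + 1) * (2 * m + 1)) = padicValNat p (a + 1) + 1) ∧
      (¬ (p - 1) ∣ k →
        padicValNat p ((m + 1) * (2 * m + 1)) ≤ padicValNat p (a + 1)) :=
  ord_p_m_add_one_general a k m p hk hkeven heq hp hpdvd
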